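/- Let p, q, r be integers with gcd(q, r) = 1. The cyclic sequence v_1 = (1,0), v_2 = (0,1), v_3 = (−1,p+1), v_4 = (−1,p), v_5 = (q,r) forms complete fan data of length 5 that is LDP fan data with exactly two singular cones if and only if p ≤ 0 and 1 ≤ q ≤ −r−1. -/

import Mathlib

/-- The determinant `det(u, w) = u₁w₂ − u₂w₁` of two integer vectors. -/
def detZ (u w : ℤ × ℤ) : ℤ := u.1 * w.2 - u.2 * w.1

/-- The real vector associated to an integer vector. -/
noncomputable def toR2 (u : ℤ × ℤ) : ℝ × ℝ := ((u.1 : ℝ), (u.2 : ℝ))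

/-- The cone `ℝ_{≥0} u + ℝ_{≥0} w` spanned by two integer vectors. -/
def coneOf (u w : ℤ × ℤ) : Set (ℝ × ℝ) :=
  {x | ∃ a b : ℝ, 0 ≤ a ∧ 0 ≤ b ∧ x = a • toR2 u + b • toR2 w}

/-- Complete fan data of length `d`: a cyclic sequence of primitive integer vectors with
`det(v_i, v_{i+1}) ≥ 1` whose successive cones cover `ℝ²` and have pairwise disjoint
interiors. -/
def IsCompleteFanData (d : ℕ) (v : ZMod d → ℤ × ℤ) : Prop :=
  3 ≤ d ∧
  (∀ i, Int.gcd (v i).1 (v i).2 = 1) ∧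
  (∀ i, 1 ≤ detZ (v i) (v (i + 1))) ∧
  (⋃ i, coneOf (v i) (v (i + 1))) = Set.univ ∧
  ∀ i j, i ≠ j →
    interior (coneOf (v i) (v (i + 1))) ∩ interior (coneOf (v j) (v (j + 1))) = ∅

/-- `f(i) = det(v_{i−1}, v_i) + det(v_i, v_{i+1}) + det(v_{i+1}, v_{i−1})`. -/
def fanF (d : ℕ) (v : ZMod d → ℤ × ℤ) (i : ZMod d) : ℤ :=
  detZ (v (i - 1)) (v i) + detZ (v i) (v (i + 1)) + detZ (v (i + 1)) (v (i - 1))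

/-- LDP fan data: complete fan data with `f(i) ≥ 1` for all `i`. -/
def IsLDPFanData (d : ℕ) (v : ZMod d → ℤ × ℤ) : Prop :=
  IsCompleteFanData d v ∧ ∀ i, 1 ≤ fanF d v i

/-- The number of singular cones, i.e. indices `i` with `det(v_i, v_{i+1}) ≥ 2`. -/
noncomputable def numSingular (d : ℕ) (v : ZMod d → ℤ × ℤ) : ℕ :=
  {i : ZMod d | 2 ≤ detZ (v i) (v (i + 1))}.ncard

/-- Equivalence of fan data: some `GL(2, ℤ)` matrix maps the vector set of one
bijectively onto the vector set of the other. -/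
def FanEquiv {d₁ d₂ : ℕ} (v : ZMod d₁ → ℤ × ℤ) (w : ZMod d₂ → ℤ × ℤ) : Prop :=
  ∃ M : Matrix (Fin 2) (Fin 2) ℤ, IsUnit M.det ∧
    (fun u : ℤ × ℤ => (M 0 0 * u.1 + M 0 1 * u.2, M 1 0 * u.1 + M 1 1 * u.2)) ''
      Set.range v = Set.range w

/-- The cyclic sequence of length `d − 1` obtained by deleting the vector `v_k`:
it lists `v_{k+1}, v_{k+2}, …, v_{k+d−1}`. -/
def deleteAt {d : ℕ} (v : ZMod d → ℤ × ℤ) (k : ZMod d) : ZMod (d - 1) → ℤ × ℤ :=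
  fun i => v (k + 1 + (i.val : ZMod d))

/-- The cyclic sequence of length `d + 1` obtained by inserting `v_k + v_{k+1}`
between `v_k` and `v_{k+1}`. -/
def insertAt {d : ℕ} (v : ZMod d → ℤ × ℤ) (k : ZMod d) : ZMod (d + 1) → ℤ × ℤ :=
  fun i =>
    if i.val ≤ k.val then v ((i.val : ℕ) : ZMod d)
    else if i.val = k.val + 1 then v k + v (k + 1)
    else v ((i.val - 1 : ℕ) : ZMod d)

/-- The data `(1,0), (0,1), (−1,p+1), (−1,p), (q,r)`. -/
def data5 (p q r : ℤ) : ZMod 5 → ℤ × ℤ := fun i =>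
  if i = 0 then (1, 0) else if i = 1 then (0, 1) else if i = 2 then (-1, p + 1)
  else if i = 3 then (-1, p) else (q, r)

/-!
Since the cones at `v₀, v₁, v₂` are unimodular, the data have exactly two singular cones iff
`det(v₃, v₄) = -r - pq ≥ 2` and `det(v₄, v₀) = -r ≥ 2`, while `f = (1 - q - r, 1 - p, 1, 1 + q,
p - 2r - pq)`. Together with `gcd(q, r) = 1`, which rules out `q = 0` and `q = -r`, this gives the
stated inequalities. Conversely, under them the fan is complete: the rays satisfy the positive
relation `v₀ + (-r - 1 - p(q + 1)) v₁ + v₂ + q v₃ + v₄ = 0`, which forces successive cones of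
positive determinant to cover the plane, and any two of the five cones are separated by the line
through `v_{i+1}` or `v_{i+2}`.
-/

def detR (x y : ℝ × ℝ) : ℝ := x.1 * y.2 - x.2 * y.1

theorem detR_comm (x y : ℝ × ℝ) : detR y x = -detR x y := by
  rw [detR, detR]; ring

theorem detR_toR2 (u w : ℤ × ℤ) : detR (toR2 u) (toR2 w) = detZ u w := by
  simp [detR, toR2, detZ]

theorem detZ_self (u : ℤ × ℤ) : detZ u u = 0 := by
  rw [detZ]; ring

theorem detZ_comm (u w : ℤ × ℤ) : detZ w u = -detZ u w := by
  rw [detZ, detZ]; ring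

theorem detR_smul_add_smul_left (a b : ℝ) (x y z : ℝ × ℝ) :
    detR (a • x + b • y) z = a * detR x z + b * detR y z := by
  simp only [detR, Prod.fst_add, Prod.snd_add, Prod.smul_fst, Prod.smul_snd, smul_eq_mul]; ring

theorem detR_smul_add_smul_right (a b : ℝ) (x y z : ℝ × ℝ) :
    detR z (a • x + b • y) = a * detR z x + b * detR z y := by
  simp only [detR, Prod.fst_add, Prod.snd_add, Prod.smul_fst, Prod.smul_snd, smul_eq_mul]; ring

theorem detR_sub_smul_left (t : ℝ) (x y z : ℝ × ℝ) :
    detR (x - t • y) z = detR x z - t * detR y z := by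
  simp only [detR, Prod.fst_sub, Prod.snd_sub, Prod.smul_fst, Prod.smul_snd, smul_eq_mul]; ring

theorem detR_sub_smul_right (t : ℝ) (x y z : ℝ × ℝ) :
    detR z (x - t • y) = detR z x - t * detR z y := by
  simp only [detR, Prod.fst_sub, Prod.snd_sub, Prod.smul_fst, Prod.smul_snd, smul_eq_mul]; ring

/-- Cramer's rule. -/
theorem detZ_smul_eq_detR_smul_add_detR_smul (u w : ℤ × ℤ) (x : ℝ × ℝ) :
    (detZ u w : ℝ) • x = detR x (toR2 w) • toR2 u + detR (toR2 u) x • toR2 w := by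
  ext <;> simp only [detR, toR2, detZ, Prod.smul_fst, Prod.smul_snd, Prod.fst_add, Prod.snd_add,
    smul_eq_mul] <;> push_cast <;> ring

theorem mem_coneOf_iff {u w : ℤ × ℤ} (hD : 0 < detZ u w) {x : ℝ × ℝ} :
    x ∈ coneOf u w ↔ 0 ≤ detR (toR2 u) x ∧ 0 ≤ detR x (toR2 w) := by
  have hD' : (0 : ℝ) < detZ u w := by exact_mod_cast hD
  constructor
  · rintro ⟨a, b, ha, hb, rfl⟩
    simp only [detR_smul_add_smul_right, detR_smul_add_smul_left, detR_toR2, detZ_self,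
      Int.cast_zero, mul_zero, zero_add, add_zero]
    exact ⟨mul_nonneg hb hD'.le, mul_nonneg ha hD'.le⟩
  · rintro ⟨h₁, h₂⟩
    refine ⟨detR x (toR2 w) / detZ u w, detR (toR2 u) x / detZ u w, by positivity,
      by positivity, ?_⟩
    rw [div_eq_inv_mul, div_eq_inv_mul, mul_smul, mul_smul, ← smul_add,
      ← detZ_smul_eq_detR_smul_add_detR_smul, inv_smul_smul₀ hD'.ne']

theorem exists_sub_smul_mem_of_mem_interior {E : Type*} [TopologicalSpace E] [AddCommGroup E]
    [Module ℝ E] [ContinuousSMul ℝ E] [ContinuousSub E] {s : Set E} {x : E}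
    (hx : x ∈ interior s) (y : E) : ∃ t : ℝ, 0 < t ∧ x - t • y ∈ s := by
  have hlim : Filter.Tendsto (fun t : ℝ => x - t • y) (nhdsWithin 0 (Set.Ioi 0)) (nhds x) :=
    ((by fun_prop : Continuous fun t : ℝ => x - t • y).tendsto' 0 x (by simp)).mono_left
      nhdsWithin_le_nhds
  obtain ⟨t, hts, ht⟩ :=
    ((hlim.eventually (mem_interior_iff_mem_nhds.1 hx)).and self_mem_nhdsWithin).exists
  exact ⟨t, ht, hts⟩

theorem detR_pos_of_mem_interior_coneOf {u w : ℤ × ℤ} (hD : 0 < detZ u w) {x : ℝ × ℝ}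
    (hx : x ∈ interior (coneOf u w)) : 0 < detR (toR2 u) x ∧ 0 < detR x (toR2 w) := by
  have hD' : (0 : ℝ) < detZ u w := by exact_mod_cast hD
  obtain ⟨s, hs, hsu⟩ := exists_sub_smul_mem_of_mem_interior hx (toR2 u)
  obtain ⟨t, ht, htw⟩ := exists_sub_smul_mem_of_mem_interior hx (toR2 w)
  have h₁ := ((mem_coneOf_iff hD).1 htw).1
  have h₂ := ((mem_coneOf_iff hD).1 hsu).2
  rw [detR_sub_smul_right, detR_toR2] at h₁
  rw [detR_sub_smul_left, detR_toR2] at h₂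
  exact ⟨by linarith [mul_pos ht hD'], by linarith [mul_pos hs hD']⟩

/-- The line `ℝ n` separates the two cones. -/
theorem interior_coneOf_inter_coneOf_eq_empty {u w u' w' : ℤ × ℤ} (n : ℤ × ℤ)
    (hD : 0 < detZ u w) (hu : 0 ≤ detZ u n) (hw : 0 ≤ detZ w n)
    (hpos : 0 < detZ u n ∨ 0 < detZ w n) (hu' : detZ u' n ≤ 0) (hw' : detZ w' n ≤ 0) :
    interior (coneOf u w) ∩ coneOf u' w' = ∅ := by
  refine Set.eq_empty_iff_forall_notMem.2 fun x ⟨hx, a, b, ha, hb, hx'⟩ => ?_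
  obtain ⟨h₁, h₂⟩ := detR_pos_of_mem_interior_coneOf hD hx
  have hcramer : (detZ u w : ℝ) * detR x (toR2 n) =
      detR x (toR2 w) * detZ u n + detR (toR2 u) x * detZ w n := by
    simp only [detR, toR2, detZ]; push_cast; ring
  have hright : 0 < detR x (toR2 w) * detZ u n + detR (toR2 u) x * detZ w n := by
    rcases hpos with hpos | hpos
    · exact add_pos_of_pos_of_nonneg (mul_pos h₂ (by exact_mod_cast hpos))
        (mul_nonneg h₁.le (by exact_mod_cast hw))
    · exact add_pos_of_nonneg_of_pos (mul_nonneg h₂.le (by exact_mod_cast hu))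
        (mul_pos h₁ (by exact_mod_cast hpos))
  have hleft : detR x (toR2 n) ≤ 0 := by
    rw [hx', detR_smul_add_smul_left, detR_toR2, detR_toR2]
    exact add_nonpos (mul_nonpos_of_nonneg_of_nonpos ha (by exact_mod_cast hu'))
      (mul_nonpos_of_nonneg_of_nonpos hb (by exact_mod_cast hw'))
  have hD' : (0 : ℝ) < detZ u w := by exact_mod_cast hD
  linarith [mul_nonpos_of_nonneg_of_nonpos hD'.le hleft]

section Cyclic

variable {d : ℕ} (v : ZMod d → ℤ × ℤ)

theorem iUnion_coneOf_eq_univ [NeZero d] (hdet : ∀ i, 0 < detZ (v i) (v (i + 1)))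
    (c : ZMod d → ℤ) (hc : ∀ i, 0 < c i) (hrel : ∑ i, c i • v i = 0) :
    ⋃ i, coneOf (v i) (v (i + 1)) = Set.univ := by
  refine Set.eq_univ_of_forall fun x => ?_
  by_contra hx
  simp only [Set.mem_iUnion, not_exists] at hx
  have hsum : ∑ j, (c j : ℝ) * detR (toR2 (v j)) x = 0 := by
    have h₁ : ∑ j, (c j : ℝ) * (v j).1 = 0 := by
      have := congrArg Prod.fst hrel
      simp only [Prod.fst_sum, Prod.smul_fst, smul_eq_mul, Prod.fst_zero] at this
      exact_mod_cast this
    have h₂ : ∑ j, (c j : ℝ) * (v j).2 = 0 := by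
      have := congrArg Prod.snd hrel
      simp only [Prod.snd_sum, Prod.smul_snd, smul_eq_mul, Prod.snd_zero] at this
      exact_mod_cast this
    simp only [detR, toR2, mul_sub, Finset.sum_sub_distrib, ← mul_assoc, ← Finset.sum_mul, h₁,
      h₂]
    ring
  -- as `x` lies in no cone, `det(v_j, x) ≥ 0` propagates around the cycle and becomes strict
  have hstep : ∀ j, 0 ≤ detR (toR2 (v j)) x → 0 < detR (toR2 (v (j + 1))) x := by
    intro j hj
    by_contra! h
    exact hx j ((mem_coneOf_iff (hdet j)).2 ⟨hj, by rw [detR_comm]; linarith⟩)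
  obtain ⟨i, hi⟩ : ∃ i, 0 ≤ detR (toR2 (v i)) x := by
    by_contra! h
    have := Finset.sum_neg (s := Finset.univ) (fun j _ => mul_neg_of_pos_of_neg
      (Int.cast_pos.2 (hc j)) (h j)) Finset.univ_nonempty
    linarith
  have hall : ∀ k : ℕ, 0 ≤ detR (toR2 (v (i + k))) x := by
    intro k
    induction k with
    | zero => simpa using hi
    | succ k ih => simpa [add_assoc] using (hstep _ ih).le
  have hpos : 0 < ∑ j, (c j : ℝ) * detR (toR2 (v j)) x := by
    refine Finset.sum_pos' (fun j _ => mul_nonneg (Int.cast_pos.2 (hc j)).le ?_)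
      ⟨i + 1, Finset.mem_univ _, mul_pos (Int.cast_pos.2 (hc _)) (hstep i hi)⟩
    simpa using hall (j - i).val
  linarith

theorem interior_coneOf_inter_coneOf_succ_eq_empty (i : ZMod d)
    (h₀ : 0 < detZ (v i) (v (i + 1))) (h₁ : 0 < detZ (v (i + 1)) (v (i + 2))) :
    interior (coneOf (v i) (v (i + 1))) ∩ coneOf (v (i + 1)) (v (i + 1 + 1)) = ∅ := by
  rw [add_assoc, one_add_one_eq_two]
  refine interior_coneOf_inter_coneOf_eq_empty (v (i + 1)) h₀ h₀.le (detZ_self _).ge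
    (Or.inl h₀) (detZ_self _).le ?_
  rw [detZ_comm]; linarith

theorem interior_coneOf_inter_coneOf_add_two_eq_empty (i : ZMod d)
    (h₀ : 0 < detZ (v i) (v (i + 1))) (h₁ : 0 < detZ (v (i + 1)) (v (i + 2)))
    (h₂ : 0 < detZ (v (i + 2)) (v (i + 3)))
    (hconv : 0 ≤ detZ (v i) (v (i + 2)) ∨ 0 ≤ detZ (v (i + 1)) (v (i + 3))) :
    interior (coneOf (v i) (v (i + 1))) ∩ coneOf (v (i + 2)) (v (i + 2 + 1)) = ∅ := by
  rw [add_assoc, show (2 : ZMod d) + 1 = 3 by norm_num]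
  rcases hconv with h | h
  · refine interior_coneOf_inter_coneOf_eq_empty (v (i + 2)) h₀ h h₁.le (Or.inr h₁)
      (detZ_self _).le ?_
    rw [detZ_comm]; linarith
  · refine interior_coneOf_inter_coneOf_eq_empty (v (i + 1)) h₀ h₀.le (detZ_self _).ge
      (Or.inl h₀) ?_ ?_ <;> rw [detZ_comm] <;> linarith

end Cyclic

theorem interior_coneOf_inter_interior_coneOf_eq_empty_five (v : ZMod 5 → ℤ × ℤ)
    (hdet : ∀ i, 0 < detZ (v i) (v (i + 1)))
    (hconv : ∀ i, 0 ≤ detZ (v i) (v (i + 2)) ∨ 0 ≤ detZ (v (i + 1)) (v (i + 3)))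
    (i j : ZMod 5) (hij : i ≠ j) :
    interior (coneOf (v i) (v (i + 1))) ∩ interior (coneOf (v j) (v (j + 1))) = ∅ := by
  have hdet₂ : ∀ i, 0 < detZ (v (i + 1)) (v (i + 2)) := fun i => by
    simpa [add_assoc, one_add_one_eq_two] using hdet (i + 1)
  have hdet₃ : ∀ i, 0 < detZ (v (i + 2)) (v (i + 3)) := fun i => by
    simpa [add_assoc, show (2 : ZMod 5) + 1 = 3 by decide] using hdet (i + 2)
  have of_closed (k l : ZMod 5)
      (h : interior (coneOf (v k) (v (k + 1))) ∩ coneOf (v l) (v (l + 1)) = ∅) :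
      interior (coneOf (v k) (v (k + 1))) ∩ interior (coneOf (v l) (v (l + 1))) = ∅ :=
    Set.subset_eq_empty (Set.inter_subset_inter_right _ interior_subset) h
  have of_closed' (k l : ZMod 5)
      (h : interior (coneOf (v l) (v (l + 1))) ∩ coneOf (v k) (v (k + 1)) = ∅) :
      interior (coneOf (v k) (v (k + 1))) ∩ interior (coneOf (v l) (v (l + 1))) = ∅ := by
    rw [Set.inter_comm]; exact of_closed l k h
  obtain ⟨k, rfl⟩ : ∃ k, j = i + k := ⟨j - i, by ring⟩
  have hk : ∀ k : ZMod 5, k = 0 ∨ k = 1 ∨ k = 2 ∨ k = 3 ∨ k = 4 := by decide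
  rcases hk k with rfl | rfl | rfl | rfl | rfl
  · simp at hij
  · exact of_closed _ _ (interior_coneOf_inter_coneOf_succ_eq_empty v i (hdet i) (hdet₂ i))
  · exact of_closed _ _ (interior_coneOf_inter_coneOf_add_two_eq_empty v i (hdet i) (hdet₂ i)
      (hdet₃ i) (hconv i))
  · obtain ⟨j, rfl⟩ : ∃ j, i = j + 2 := ⟨i - 2, by ring⟩
    rw [add_assoc j 2 3, show (2 + 3 : ZMod 5) = 0 from rfl, add_zero]
    exact of_closed' _ _ (interior_coneOf_inter_coneOf_add_two_eq_empty v j (hdet j) (hdet₂ j)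
      (hdet₃ j) (hconv j))
  · obtain ⟨j, rfl⟩ : ∃ j, i = j + 1 := ⟨i - 1, by ring⟩
    rw [add_assoc j 1 4, show (1 + 4 : ZMod 5) = 0 from rfl, add_zero]
    exact of_closed' _ _ (interior_coneOf_inter_coneOf_succ_eq_empty v j (hdet j) (hdet₂ j))

theorem forall_zmod_five {P : ZMod 5 → Prop} : (∀ i, P i) ↔ P 0 ∧ P 1 ∧ P 2 ∧ P 3 ∧ P 4 := by
  refine ⟨fun h => ⟨h 0, h 1, h 2, h 3, h 4⟩, fun ⟨h₀, h₁, h₂, h₃, h₄⟩ i => ?_⟩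
  fin_cases i <;> assumption

theorem isCompleteFanData_five (v : ZMod 5 → ℤ × ℤ) (hprim : ∀ i, Int.gcd (v i).1 (v i).2 = 1)
    (hdet : ∀ i, 1 ≤ detZ (v i) (v (i + 1))) (c : ZMod 5 → ℤ) (hc : ∀ i, 0 < c i)
    (hrel : ∑ i, c i • v i = 0)
    (hconv : ∀ i, 0 ≤ detZ (v i) (v (i + 2)) ∨ 0 ≤ detZ (v (i + 1)) (v (i + 3))) :
    IsCompleteFanData 5 v :=
  ⟨by norm_num, hprim, hdet, iUnion_coneOf_eq_univ v hdet c hc hrel,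
    interior_coneOf_inter_interior_coneOf_eq_empty_five v hdet hconv⟩

section data5

variable (p q r : ℤ)

theorem one_le_fanF_data5_iff :
    (∀ i, 1 ≤ fanF 5 (data5 p q r) i) ↔ q + r ≤ 0 ∧ p ≤ 0 ∧ 0 ≤ q ∧ 1 ≤ p - 2 * r - p * q := by
  rw [forall_zmod_five]
  simp +decide [fanF, data5, detZ]
  constructor <;> rintro ⟨h₀, h₁, h₃, h₄⟩ <;> refine ⟨?_, ?_, ?_, ?_⟩ <;> linarith

theorem numSingular_data5_eq_two_iff :
    numSingular 5 (data5 p q r) = 2 ↔ 2 ≤ -r - p * q ∧ 2 ≤ -r := by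
  set S := {i : ZMod 5 | 2 ≤ detZ (data5 p q r i) (data5 p q r (i + 1))}
  have hS : S ⊆ {3, 4} := by
    intro i
    revert i
    rw [forall_zmod_five]
    simp +decide [S, data5, detZ]
  have h₃ : 3 ∈ S ↔ 2 ≤ -r - p * q := by simp +decide [S, data5, detZ]
  have h₄ : 4 ∈ S ↔ 2 ≤ -r := by simp +decide [S, data5, detZ]
  change S.ncard = 2 ↔ _
  rw [← h₃, ← h₄, ← Set.singleton_subset_iff (a := (4 : ZMod 5)), ← Set.insert_subset_iff]
  have hcard : ({3, 4} : Set (ZMod 5)).ncard = 2 := Set.ncard_pair (by decide)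
  constructor
  · intro h
    rw [Set.eq_of_subset_of_ncard_le hS (by rw [hcard, h]) (Set.toFinite _)]
  · intro h
    rw [hS.antisymm h, hcard]

theorem isCompleteFanData_data5 (hqr : Int.gcd q r = 1) (hp : p ≤ 0) (hq : 1 ≤ q)
    (hr : q ≤ -r - 1) : IsCompleteFanData 5 (data5 p q r) := by
  have hpq : p * q ≤ 0 := by nlinarith
  refine isCompleteFanData_five _ ?_ ?_
    (fun i => if i = 1 then -r - 1 - p * (q + 1) else if i = 3 then q else 1) ?_ ?_ ?_
  · rw [forall_zmod_five]
    simp +decide [data5, hqr]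
  · rw [forall_zmod_five]
    simp +decide [data5, detZ]
    constructor <;> linarith
  · rw [forall_zmod_five]
    simp +decide
    constructor <;> nlinarith
  · rw [show (Finset.univ : Finset (ZMod 5)) = {0, 1, 2, 3, 4} from rfl]
    simp +decide [data5]
    ring
  · rw [forall_zmod_five]
    simp +decide [data5, detZ]
    exact ⟨Or.inr hp, Or.inl hp, Or.inl (by linarith)⟩

end data5

/-- Characterization of the pentagonal LDP fan data with exactly two singular cones. -/
theorem pentagon_two_singular (p q r : ℤ) (hqr : Int.gcd q r = 1) :
    (IsLDPFanData 5 (data5 p q r) ∧ numSingular 5 (data5 p q r) = 2) ↔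
      (p ≤ 0 ∧ 1 ≤ q ∧ q ≤ -r - 1) := by
  rw [IsLDPFanData, one_le_fanF_data5_iff, numSingular_data5_eq_two_iff]
  constructor
  · rintro ⟨⟨-, hqr₀, hp, hq₀, -⟩, -, hr⟩
    have hq : q ≠ 0 := by
      rintro rfl
      rw [Int.gcd_zero_left] at hqr
      omega
    have hq' : q ≠ -r := by
      rintro rfl
      rw [Int.neg_gcd, Int.gcd_self] at hqr
      omega
    omega
  · rintro ⟨hp, hq, hr⟩
    have hpq : p * q ≤ 0 := by nlinarith
    exact ⟨⟨isCompleteFanData_data5 p q r hqr hp hq hr, by omega, hp, by omega, by nlinarith⟩,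
      by omega, by omega⟩
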